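/- arXiv:2011.14291 — 8 statements merged into one kernel-verified Lean document; each statement's English description precedes it below -/
import Mathlib

section
/- Let G be a finite simple graph on a nonempty finite vertex set V, with m edges, and let ε be a real number with 0 < ε and ε·m < n, where n = |V|. If G is ε-far from connected, i.e., for every connected simple graph H on V the symmetric difference of the edge sets of G and H has size at least ε·m, then the number of connected components of G is at least ε·m + 1. -/
open SimpleGraph

/-- If a graph `G` on a nonempty finite vertex set with `m` edges is `ε`-far from
connected (every connected graph on the same vertex set differs from `G` in at least
`ε·m` edges), and `ε·m < n`, then `G` has at least `ε·m + 1` connected components. -/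
theorem stmt0 {V : Type*} [Fintype V] [Nonempty V]
    (G : SimpleGraph V) (ε : ℝ) (m : ℕ) (hm : m = G.edgeSet.ncard)
    (hε : 0 < ε) (hεm : ε * m < Fintype.card V)
    (hfar : ∀ H : SimpleGraph V, H.Connected →
      ε * m ≤ ((symmDiff G.edgeSet H.edgeSet).ncard : ℝ)) :
    ε * m + 1 ≤ (Nat.card G.ConnectedComponent : ℝ) := by
  classical
  obtain ⟨v₀⟩ := ‹Nonempty V›
  set c₀ : G.ConnectedComponent := G.connectedComponentMk v₀ with hc₀
  -- representative
  have hout : ∀ c : G.ConnectedComponent, G.connectedComponentMk c.out = c :=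
    fun c => c.out_eq
  set S : Set (Sym2 V) := (fun c : G.ConnectedComponent => s(c.out, c₀.out)) '' {c | c ≠ c₀}
    with hS
  set H : SimpleGraph V := G ⊔ SimpleGraph.fromEdgeSet S with hH
  have hGH : G ≤ H := le_sup_left
  -- H connected
  have hreach : ∀ v : V, H.Reachable v c₀.out := by
    intro v
    have h1 : G.Reachable v (G.connectedComponentMk v).out := by
      rw [← SimpleGraph.ConnectedComponent.eq]
      exact (hout _).symm
    refine (h1.mono hGH).trans ?_
    by_cases hc : G.connectedComponentMk v = c₀
    · rw [hc]
    · refine SimpleGraph.Adj.reachable ?_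
      refine Or.inr ⟨⟨_, hc, rfl⟩, ?_⟩
      intro hne
      exact hc (by rw [← hout (G.connectedComponentMk v), hne, hout])
  have hconn : H.Connected := by
    rw [SimpleGraph.connected_iff]
    exact ⟨fun u v => (hreach u).trans (hreach v).symm, ⟨v₀⟩⟩
  have hfarH := hfar H hconn
  -- bound symmDiff
  have hsub : symmDiff G.edgeSet H.edgeSet ⊆ S := by
    rw [symmDiff_def]
    rintro e (⟨he, hne⟩ | ⟨he, hne⟩)
    · exact absurd (SimpleGraph.edgeSet_mono hGH he) hne
    · rw [hH, SimpleGraph.edgeSet_sup] at he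
      rcases he with he | he
      · exact absurd he hne
      · exact (SimpleGraph.edgeSet_fromEdgeSet S ▸ he).1
  have hcard1 : (symmDiff G.edgeSet H.edgeSet).ncard ≤ S.ncard :=
    Set.ncard_le_ncard hsub (Set.toFinite S)
  have hcard2 : S.ncard ≤ ({c : G.ConnectedComponent | c ≠ c₀}).ncard :=
    Set.ncard_image_le (Set.toFinite _)
  have hcard3 : ({c : G.ConnectedComponent | c ≠ c₀}).ncard = Nat.card G.ConnectedComponent - 1 := by
    have h1 : {c : G.ConnectedComponent | c ≠ c₀} = Set.univ \ {c₀} := by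
      ext c; simp
    rw [h1, Set.ncard_diff (Set.subset_univ _), Set.ncard_univ, Set.ncard_singleton]
  have hpos : 1 ≤ Nat.card G.ConnectedComponent :=
    Nat.one_le_iff_ne_zero.2 (Nat.card_ne_zero.2 ⟨⟨c₀⟩, Finite.of_fintype _⟩)
  have : ε * m ≤ (Nat.card G.ConnectedComponent - 1 : ℕ) := by
    refine hfarH.trans ?_
    exact_mod_cast Nat.cast_le.2 (hcard1.trans (hcard2.trans_eq hcard3))
  have hcast : ((Nat.card G.ConnectedComponent - 1 : ℕ) : ℝ)
      = (Nat.card G.ConnectedComponent : ℝ) - 1 := by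
    rw [Nat.cast_sub hpos]; norm_num
  linarith [this, hcast.le, hcast.ge]
end

section
/- Let G be a finite simple graph on a nonempty finite vertex set V of size n, with m edges, and let ε, α be reals with 0 < ε, ε·m < n, and 0 ≤ α < ε/2. Suppose G is ε-far from connected, i.e., every connected simple graph on V differs from G in at least ε·m edges. Let D be a set of incidences of G with |D| ≤ 2α·m. Then the number of connected components of G containing no marked incidence is at least (ε − 2α)·m. -/
/-- If an `ε`-far-from-connected graph `G` with `m` edges has a set `D` of marked
incidences with `|D| ≤ 2α·m` where `0 ≤ α < ε/2`, then at least `(ε - 2α)·m` connected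
components of `G` contain no marked incidence. -/
theorem stmt3 {V : Type*} [Fintype V] [Nonempty V]
    (G : SimpleGraph V) (ε α : ℝ) (m : ℕ) (hm : m = G.edgeSet.ncard)
    (hε : 0 < ε) (hεm : ε * m < Fintype.card V)
    (hα : 0 ≤ α) (hαε : α < ε / 2)
    (hfar : ∀ H : SimpleGraph V, H.Connected →
      ε * m ≤ ((symmDiff G.edgeSet H.edgeSet).ncard : ℝ))
    (D : Finset (V × Sym2 V))
    (hD : ∀ p ∈ D, p.2 ∈ G.edgeSet ∧ p.1 ∈ p.2)
    (hDcard : (D.card : ℝ) ≤ 2 * α * m) :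
    (ε - 2 * α) * m ≤
      (({C : G.ConnectedComponent | ∀ p ∈ D, G.connectedComponentMk p.1 ≠ C}).ncard : ℝ) := by
  classical
  have hrep : ∀ C : G.ConnectedComponent, G.connectedComponentMk C.out = C :=
    fun C => C.out_eq
  set C₀ : G.ConnectedComponent := G.connectedComponentMk (Classical.arbitrary V) with hC0
  set v₀ : V := C₀.out with hv0
  set S : Set (Sym2 V) := (fun C : G.ConnectedComponent => s(v₀, C.out)) '' {C | C ≠ C₀}
    with hS
  set H : SimpleGraph V := G ⊔ SimpleGraph.fromEdgeSet S with hH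
  -- H is connected
  have hreachrep : ∀ u : V, G.Reachable u (G.connectedComponentMk u).out := by
    intro u
    exact (SimpleGraph.ConnectedComponent.exact (hrep (G.connectedComponentMk u)).symm)
  have hGH : G ≤ H := le_sup_left
  have hreach0 : ∀ u : V, H.Reachable u v₀ := by
    intro u
    refine ((hreachrep u).mono hGH).trans ?_
    by_cases hc : G.connectedComponentMk u = C₀
    · rw [hc]
    · refine SimpleGraph.Adj.reachable ?_
      have hne : (G.connectedComponentMk u).out ≠ v₀ := by
        intro h
        apply hc
        rw [← hrep (G.connectedComponentMk u), h, hv0, hrep]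
      refine Or.inr ?_
      rw [SimpleGraph.fromEdgeSet_adj]
      refine ⟨⟨G.connectedComponentMk u, hc, by rw [Sym2.eq_swap]⟩, hne⟩
  have hHconn : H.Connected := by
    refine ⟨fun u v => (hreach0 u).trans (hreach0 v).symm⟩
  -- symmetric difference is contained in S
  have hsub : symmDiff G.edgeSet H.edgeSet ⊆ S := by
    intro e he
    rw [symmDiff_def] at he
    rcases he with he | he
    · exact absurd (SimpleGraph.edgeSet_mono hGH he.1) he.2
    · rcases he with ⟨he1, he2⟩
      rw [hH, SimpleGraph.edgeSet_sup] at he1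
      rcases he1 with h | h
      · exact absurd h he2
      · rw [SimpleGraph.edgeSet_fromEdgeSet] at h
        exact h.1
  -- cardinality bounds
  have hc1 : (1 : ℕ) ≤ Nat.card G.ConnectedComponent := Nat.one_le_iff_ne_zero.mpr
    (Nat.card_ne_zero.mpr ⟨⟨C₀⟩, inferInstance⟩)
  have hSfin : S.Finite := (Set.toFinite _)
  have hScard : S.ncard ≤ Nat.card G.ConnectedComponent - 1 := by
    calc S.ncard ≤ ({C : G.ConnectedComponent | C ≠ C₀}).ncard :=
          Set.ncard_image_le (Set.toFinite _)
      _ = Nat.card G.ConnectedComponent - 1 := by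
          have := Set.ncard_add_ncard_compl {C : G.ConnectedComponent | C ≠ C₀}
            (Set.toFinite _) (Set.toFinite _)
          have hcomp : ({C : G.ConnectedComponent | C ≠ C₀})ᶜ = {C₀} := by
            ext C; simp [Set.mem_compl_iff]
          rw [hcomp, Set.ncard_singleton] at this
          omega
  have hεc : ε * m + 1 ≤ (Nat.card G.ConnectedComponent : ℝ) := by
    have h1 := hfar H hHconn
    have h2 : (symmDiff G.edgeSet H.edgeSet).ncard ≤ S.ncard :=
      Set.ncard_le_ncard hsub hSfin
    have h3 : ((Nat.card G.ConnectedComponent - 1 : ℕ) : ℝ)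
        = (Nat.card G.ConnectedComponent : ℝ) - 1 := by
      push_cast [Nat.cast_sub hc1]; ring
    have h2' : ((symmDiff G.edgeSet H.edgeSet).ncard : ℝ)
        ≤ ((Nat.card G.ConnectedComponent - 1 : ℕ) : ℝ) := by
      exact_mod_cast le_trans h2 hScard
    rw [h3] at h2'
    linarith
  -- the bad components are the image of D
  have hgood : {C : G.ConnectedComponent | ∀ p ∈ D, G.connectedComponentMk p.1 ≠ C}
      = ((fun p : V × Sym2 V => G.connectedComponentMk p.1) '' (D : Set (V × Sym2 V)))ᶜ := by
    ext C
    simp only [Set.mem_setOf_eq, Set.mem_compl_iff, Set.mem_image, Finset.mem_coe, not_exists,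
      not_and]
  have himg : ((fun p : V × Sym2 V => G.connectedComponentMk p.1) ''
      (D : Set (V × Sym2 V))).ncard ≤ D.card := by
    calc _ ≤ (D : Set (V × Sym2 V)).ncard := Set.ncard_image_le (Set.toFinite _)
      _ = D.card := Set.ncard_coe_finset D
  have hcompl := Set.ncard_add_ncard_compl
    ((fun p : V × Sym2 V => G.connectedComponentMk p.1) '' (D : Set (V × Sym2 V)))
    (Set.toFinite _) (Set.toFinite _)
  rw [hgood]
  have hineq : Nat.card G.ConnectedComponent - D.card ≤
      (((fun p : V × Sym2 V => G.connectedComponentMk p.1) ''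
        (D : Set (V × Sym2 V)))ᶜ).ncard := by omega
  have hineq' : (Nat.card G.ConnectedComponent : ℝ) - D.card ≤
      ((((fun p : V × Sym2 V => G.connectedComponentMk p.1) ''
        (D : Set (V × Sym2 V)))ᶜ).ncard : ℝ) := by
    calc (Nat.card G.ConnectedComponent : ℝ) - D.card
        ≤ ((Nat.card G.ConnectedComponent - D.card : ℕ) : ℝ) := by
          rcases le_total D.card (Nat.card G.ConnectedComponent) with h | h
          · rw [Nat.cast_sub h]
          · have : (D.card : ℝ) ≥ (Nat.card G.ConnectedComponent : ℝ) := Nat.cast_le.mpr h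
            have h0 : (0:ℝ) ≤ ((Nat.card G.ConnectedComponent - D.card : ℕ) : ℝ) := Nat.cast_nonneg _
            linarith
      _ ≤ _ := Nat.cast_le.mpr hineq
  linarith
end

section
/- Let (Ω, P) be a probability space and X : Ω → [0,1] a random variable with E[X] ≥ β for some real β ∈ (0, 1]. Let t = ⌈log₂(4/β)⌉, and for each i ∈ {1, …, t} let p_i = P[X ≥ 2^{−i}] and k_i = (4 ln 6)/(2^i · β). Then ∏_{i=1}^{t} (1 − p_i)^{k_i} ≤ 1/6, where exponentiation is real-valued exponentiation. -/
/-!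
Dyadic layer cake: every `x ≤ 1` satisfies `x ≤ 2^{-t} + ∑_{i ≤ t} 2 · 2^{-i} · 1[x ≥ 2^{-i}]`,
so taking expectations `β ≤ 2^{-t} + 2 ∑ 2^{-i} p_i`, and `2^{-t} ≤ β/4` by the choice of `t`.
Hence `∑ k_i p_i = (4 ln 6 / β) ∑ 2^{-i} p_i ≥ (3/2) ln 6`, and `1 - p ≤ e^{-p}` bounds the
product by `e^{-∑ k_i p_i} ≤ 1/6`.
-/

open MeasureTheory

lemma le_two_pow_ceil_logb {y : ℝ} (hy : 0 < y) : y ≤ 2 ^ ⌈Real.logb 2 y⌉₊ := by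
  rw [← Real.rpow_natCast, ← Real.logb_le_iff_le_rpow one_lt_two hy]
  exact Nat.le_ceil _

lemma le_two_zpow_neg_add_sum_indicator {x : ℝ} (hx : x ≤ 1) (t : ℕ) :
    x ≤ 2 ^ (-(t : ℤ)) + ∑ i ∈ Finset.Icc 1 t,
      (2 : ℝ) * 2 ^ (-(i : ℤ)) * {y : ℝ | 2 ^ (-(i : ℤ)) ≤ y}.indicator 1 x := by
  induction t with
  | zero => simpa using hx
  | succ t ih =>
    rw [Finset.sum_Icc_succ_top (by omega)]
    by_cases hxt : x ∈ {y : ℝ | 2 ^ (-((t + 1 : ℕ) : ℤ)) ≤ y}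
    · have hhalf : (2 : ℝ) ^ (-(t : ℤ)) = 2 * 2 ^ (-((t + 1 : ℕ) : ℤ)) := by
        rw [Nat.cast_succ, neg_add, zpow_add₀ two_ne_zero, zpow_neg_one]; ring
      rw [Set.indicator_of_mem hxt, Pi.one_apply]
      linarith [zpow_pos (two_pos (α := ℝ)) (-((t + 1 : ℕ) : ℤ))]
    · have hsum_nonneg : 0 ≤ ∑ i ∈ Finset.Icc 1 t,
          (2 : ℝ) * 2 ^ (-(i : ℤ)) * {y : ℝ | 2 ^ (-(i : ℤ)) ≤ y}.indicator 1 x :=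
        Finset.sum_nonneg fun i _ ↦
          mul_nonneg (by positivity) (Set.indicator_nonneg (fun _ _ ↦ zero_le_one) x)
      rw [Set.indicator_of_notMem hxt]
      simp only [Set.mem_ofPred_eq, not_le] at hxt
      linarith

lemma integral_le_two_zpow_neg_add_sum_measureReal {Ω : Type*} [MeasurableSpace Ω]
    {P : Measure Ω} [IsProbabilityMeasure P] {X : Ω → ℝ} (hX : Measurable X)
    (hXint : Integrable X P) (hX1 : ∀ ω, X ω ≤ 1) (t : ℕ) :
    ∫ ω, X ω ∂P ≤ 2 ^ (-(t : ℤ)) + ∑ i ∈ Finset.Icc 1 t,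
      (2 : ℝ) * 2 ^ (-(i : ℤ)) * P.real {ω | 2 ^ (-(i : ℤ)) ≤ X ω} := by
  have hset (i : ℕ) : MeasurableSet {ω | (2 : ℝ) ^ (-(i : ℤ)) ≤ X ω} :=
    measurableSet_le measurable_const hX
  have hterm (i : ℕ) : Integrable
      (fun ω ↦ (2 : ℝ) * 2 ^ (-(i : ℤ)) * {ω | (2 : ℝ) ^ (-(i : ℤ)) ≤ X ω}.indicator 1 ω) P :=
    ((integrable_const 1).indicator (hset i)).const_mul _
  calc ∫ ω, X ω ∂P
      ≤ ∫ ω, (2 ^ (-(t : ℤ)) + ∑ i ∈ Finset.Icc 1 t,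
          (2 : ℝ) * 2 ^ (-(i : ℤ)) * {ω | (2 : ℝ) ^ (-(i : ℤ)) ≤ X ω}.indicator 1 ω) ∂P :=
        integral_mono hXint ((integrable_const _).add (integrable_finsetSum _ fun i _ ↦ hterm i))
          fun ω ↦ le_two_zpow_neg_add_sum_indicator (hX1 ω) t
    _ = _ := by
        rw [integral_add (integrable_const _) (integrable_finsetSum _ fun i _ ↦ hterm i),
          integral_const, integral_finsetSum _ fun i _ ↦ hterm i]
        simp only [probReal_univ, one_smul, integral_const_mul, integral_indicator_one (hset _)]

lemma prod_one_sub_rpow_le_exp_neg_sum {ι : Type*} (s : Finset ι) {p k : ι → ℝ}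
    (hp : ∀ i ∈ s, p i ≤ 1) (hk : ∀ i ∈ s, 0 ≤ k i) :
    ∏ i ∈ s, (1 - p i) ^ k i ≤ Real.exp (-∑ i ∈ s, k i * p i) := by
  rw [← Finset.sum_neg_distrib, Real.exp_sum]
  refine Finset.prod_le_prod (fun i hi ↦ Real.rpow_nonneg (by linarith [hp i hi]) _) fun i hi ↦ ?_
  calc (1 - p i) ^ k i ≤ Real.exp (-p i) ^ k i :=
        Real.rpow_le_rpow (by linarith [hp i hi]) (Real.one_sub_le_exp_neg _) (hk i hi)
    _ = Real.exp (-(k i * p i)) := by rw [← Real.exp_mul]; ring_nf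

/-- The work investment strategy lemma of Berman, Raskhodnikova and Yaroslavtsev:
if `X : Ω → [0,1]` has expectation at least `β`, `t = ⌈log₂(4/β)⌉`,
`p i = P[X ≥ 2^{-i}]` and `k i = 4 ln 6 / (2^i β)`, then
`∏_{i=1}^t (1 - p i)^(k i) ≤ 1/6`. -/
theorem stmt4 {Ω : Type*} [MeasurableSpace Ω] (P : Measure Ω) [IsProbabilityMeasure P]
    (X : Ω → ℝ) (hX : Measurable X) (hX01 : ∀ ω, X ω ∈ Set.Icc (0 : ℝ) 1)
    (β : ℝ) (hβ : β ∈ Set.Ioc (0 : ℝ) 1)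
    (hEX : β ≤ ∫ ω, X ω ∂P) :
    ∏ i ∈ Finset.Icc 1 ⌈Real.logb 2 (4 / β)⌉₊,
        (1 - (P {ω | (2 : ℝ) ^ (-(i : ℤ)) ≤ X ω}).toReal) ^
          (4 * Real.log 6 / (2 ^ i * β)) ≤ 1 / 6 := by
  set t := ⌈Real.logb 2 (4 / β)⌉₊
  set p : ℕ → ℝ := fun i ↦ P.real {ω | (2 : ℝ) ^ (-(i : ℤ)) ≤ X ω}
  have hβ0 : 0 < β := hβ.1
  have hXint : Integrable X P :=
    .of_bound hX.aestronglyMeasurable 1 (.of_forall fun ω ↦ by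
      rw [Real.norm_of_nonneg (hX01 ω).1]; exact (hX01 ω).2)
  have htβ : (2 : ℝ) ^ (-(t : ℤ)) ≤ β / 4 := by
    rw [zpow_neg, zpow_natCast, inv_le_comm₀ (by positivity) (by positivity), inv_div]
    exact le_two_pow_ceil_logb (by positivity)
  have hlayer := hEX.trans (integral_le_two_zpow_neg_add_sum_measureReal hX hXint
    (fun ω ↦ (hX01 ω).2) t)
  have hweights (i : ℕ) : 4 * Real.log 6 / (2 ^ i * β) * p i
      = 2 * Real.log 6 / β * (2 * 2 ^ (-(i : ℤ)) * p i) := by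
    rw [zpow_neg, zpow_natCast]; field_simp; ring
  have hsum : Real.log 6 ≤ ∑ i ∈ Finset.Icc 1 t, 4 * Real.log 6 / (2 ^ i * β) * p i := by
    rw [Finset.sum_congr rfl fun i _ ↦ hweights i, ← Finset.mul_sum]
    have hlog6 : 0 ≤ Real.log 6 := Real.log_nonneg (by norm_num)
    calc Real.log 6 ≤ 2 * Real.log 6 / β * (3 * β / 4) := by
          rw [div_mul_eq_mul_div, le_div_iff₀ hβ0]; nlinarith
      _ ≤ _ := by gcongr; linarith
  calc _ ≤ Real.exp (-∑ i ∈ Finset.Icc 1 t, 4 * Real.log 6 / (2 ^ i * β) * p i) :=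
        prod_one_sub_rpow_le_exp_neg_sum _ (fun i _ ↦ measureReal_le_one) fun i _ ↦ by positivity
    _ ≤ Real.exp (-Real.log 6) := Real.exp_le_exp.mpr (neg_le_neg hsum)
    _ = 1 / 6 := by rw [Real.exp_neg, Real.exp_log (by norm_num), one_div]
end

section
/- Let G be a finite simple graph on a nonempty finite vertex set V of size n, with m ≥ 1 edges, and let d̄ = 2m/n. Let ε, α be reals with 0 < ε, ε·m < n, 0 ≤ α < ε, and ε − α ≥ 4/d̄². Suppose G is ε-far from connected, i.e., every connected simple graph on V differs from G in at least ε·m edges, and let D be a set of incidences of G with |D| ≤ 2α·m. Then the number of connected components of G that have at most 4/((ε − α)·d̄) vertices and contain at most one marked incidence is at least (ε − α)·m/2. -/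
/-!
Joining a fixed vertex to one representative of every other connected component makes `G`
connected at the cost of (number of components − 1) new edges, so an `ε`-far graph has more than
`ε m` components. The components partition the `n` vertices, so at most `n / s = (ε - α) m / 2`
of them have more than `s = 4 / ((ε - α) d̄)` vertices; they also partition the marked
incidences, so at most `|D| / 2 ≤ α m` of them carry two or more. The remaining components number
at least `(ε - α) m / 2`.
-/

open Finset

theorem Set.ncard_setOf_le_ncard_fiber_mul_le {α β : Type*} [Finite β] {s : Set α}
    (hs : s.Finite) (f : α → β) (t : ℝ) :
    ({b | t ≤ ({a ∈ s | f a = b}.ncard : ℝ)}.ncard : ℝ) * t ≤ s.ncard := by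
  classical
  have := Fintype.ofFinite β
  obtain ⟨s, rfl⟩ := hs.exists_finset_coe
  have hfiber : ∀ b, {a ∈ (s : Set α) | f a = b} = ↑({a ∈ s | f a = b} : Finset α) := by
    intro b; ext; simp
  simp_rw [hfiber, Set.ncard_coe_finset, ← coe_filter_univ, Set.ncard_coe_finset]
  calc (#{b | t ≤ (#{a ∈ s | f a = b} : ℝ)} : ℝ) * t
      = ∑ b ∈ {b | t ≤ (#{a ∈ s | f a = b} : ℝ)}, t := by rw [sum_const, nsmul_eq_mul]
    _ ≤ ∑ b ∈ {b | t ≤ (#{a ∈ s | f a = b} : ℝ)}, (#{a ∈ s | f a = b} : ℝ) :=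
        sum_le_sum fun b hb => (mem_filter.1 hb).2
    _ ≤ ∑ b, (#{a ∈ s | f a = b} : ℝ) :=
        sum_le_sum_of_subset_of_nonneg (Finset.subset_univ _) fun _ _ _ => Nat.cast_nonneg _
    _ = #s := by exact_mod_cast (card_eq_sum_card_fiberwise fun _ _ => Finset.mem_univ _).symm

theorem Set.ncard_setOf_one_lt_ncard_fiber_mul_two_le {α β : Type*} [Finite β] {s : Set α}
    (hs : s.Finite) (f : α → β) :
    ({b | 1 < {a ∈ s | f a = b}.ncard}.ncard : ℝ) * 2 ≤ s.ncard := by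
  have hsub :
      {b | 1 < {a ∈ s | f a = b}.ncard} ⊆ {b | (2 : ℝ) ≤ {a ∈ s | f a = b}.ncard} := by
    intro b (hb : 1 < _)
    show (2 : ℝ) ≤ _
    exact_mod_cast hb
  grw [Set.ncard_le_ncard hsub, Set.ncard_setOf_le_ncard_fiber_mul_le hs f 2]

theorem Set.card_le_ncard_setOf_and_add_ncard_add_ncard {α : Type*} [Finite α]
    (p q : α → Prop) :
    Nat.card α ≤ {a | p a ∧ q a}.ncard + {a | ¬ p a}.ncard + {a | ¬ q a}.ncard := by
  have hcompl : {a | p a ∧ q a}ᶜ = {a | ¬ p a} ∪ {a | ¬ q a} := by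
    ext a; simp only [Set.mem_compl_iff, Set.mem_ofPred_eq, Set.mem_union]; tauto
  rw [← Set.ncard_add_ncard_compl {a | p a ∧ q a}, hcompl, add_assoc]
  exact Nat.add_le_add_left (Set.ncard_union_le _ _) _

namespace SimpleGraph

variable {V : Type*} (G : SimpleGraph V)

theorem symmDiff_edgeSet_sup_fromEdgeSet {s : Set (Sym2 V)} (hdisj : Disjoint s G.edgeSet)
    (hdiag : ∀ e ∈ s, ¬ e.IsDiag) : symmDiff G.edgeSet (G ⊔ fromEdgeSet s).edgeSet = s := by
  have hs : s \ Sym2.diagSet = s := (Set.disjoint_left.2 hdiag).sdiff_eq_left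
  rw [edgeSet_sup, edgeSet_fromEdgeSet, hs, symmDiff_of_le Set.subset_union_left,
    Set.union_sdiff_left, hdisj.sdiff_eq_left]

theorem ncard_setOf_lt_ncard_supp_mul_le [Finite V] {t : ℝ} (ht : 0 ≤ t) :
    ({C : G.ConnectedComponent | t < C.supp.ncard}.ncard : ℝ) * t ≤ Nat.card V := by
  have hsub : {C : G.ConnectedComponent | t < C.supp.ncard} ⊆
      {C | t ≤ ({v ∈ Set.univ | G.connectedComponentMk v = C}.ncard : ℝ)} := by
    intro C (hC : t < _)
    simpa [ConnectedComponent.supp] using hC.le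
  grw [Set.ncard_le_ncard hsub, Set.ncard_setOf_le_ncard_fiber_mul_le Set.finite_univ _ t,
    Set.ncard_univ]

def componentStar (v : V) : Set (Sym2 V) :=
  (fun C : G.ConnectedComponent => s(v, C.out)) '' {G.connectedComponentMk v}ᶜ

variable {G}

theorem connectedComponentMk_out (C : G.ConnectedComponent) : G.connectedComponentMk C.out = C :=
  C.out_eq

theorem disjoint_componentStar_edgeSet (v : V) : Disjoint (G.componentStar v) G.edgeSet := by
  rw [Set.disjoint_left]
  rintro _ ⟨C, hC, rfl⟩ hadj
  rw [← connectedComponentMk_out C, Set.mem_compl_singleton_iff, ne_eq,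
    ConnectedComponent.eq] at hC
  exact hC ((mem_edgeSet G).1 hadj).reachable.symm

theorem not_isDiag_of_mem_componentStar {v : V} {e : Sym2 V} (he : e ∈ G.componentStar v) :
    ¬ e.IsDiag := by
  obtain ⟨C, hC, rfl⟩ := he
  rintro (h : v = C.out)
  rw [h, connectedComponentMk_out] at hC
  exact hC rfl

theorem connected_sup_fromEdgeSet_componentStar (v : V) :
    (G ⊔ fromEdgeSet (G.componentStar v)).Connected := by
  refine (connected_iff_exists_forall_reachable _).2 ⟨v, fun w => ?_⟩
  have hw : G.Reachable (G.connectedComponentMk w).out w :=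
    ConnectedComponent.eq.1 (connectedComponentMk_out _)
  refine Reachable.trans ?_ (hw.mono le_sup_left)
  by_cases hC : G.connectedComponentMk w = G.connectedComponentMk v
  · exact ((ConnectedComponent.eq.1 hC).symm.trans hw.symm).mono le_sup_left
  · have hstar : s(v, (G.connectedComponentMk w).out) ∈ G.componentStar v := ⟨_, hC, rfl⟩
    exact Adj.reachable <| Or.inr <|
      (fromEdgeSet_adj _).2 ⟨hstar, not_isDiag_of_mem_componentStar hstar⟩

theorem ncard_componentStar_add_one [Finite V] (v : V) :
    (G.componentStar v).ncard + 1 = Nat.card G.ConnectedComponent := by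
  have hinj : Set.InjOn (fun C : G.ConnectedComponent => s(v, C.out))
      {G.connectedComponentMk v}ᶜ := by
    intro C hC C' hC' h
    rcases Sym2.eq_iff.1 h with ⟨-, h⟩ | ⟨hv, -⟩
    · rw [← connectedComponentMk_out C, h, connectedComponentMk_out]
    · rw [hv, connectedComponentMk_out] at hC'
      exact absurd rfl hC'
  rw [componentStar, hinj.ncard_image, ← Set.ncard_add_ncard_compl
    {G.connectedComponentMk v}, Set.ncard_singleton, add_comm]

theorem exists_connected_ncard_symmDiff_edgeSet_add_one [Finite V] [Nonempty V] :
    ∃ H : SimpleGraph V, H.Connected ∧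
      (symmDiff G.edgeSet H.edgeSet).ncard + 1 = Nat.card G.ConnectedComponent := by
  let v := Classical.arbitrary V
  refine ⟨G ⊔ fromEdgeSet (G.componentStar v), connected_sup_fromEdgeSet_componentStar v, ?_⟩
  rw [symmDiff_edgeSet_sup_fromEdgeSet G (disjoint_componentStar_edgeSet v)
    fun _ => not_isDiag_of_mem_componentStar, ncard_componentStar_add_one]

end SimpleGraph

theorem stmt5_general {V : Type*} [Fintype V] [Nonempty V]
    (G : SimpleGraph V) (ε α : ℝ) (m n : ℕ)
    (hn : n = Fintype.card V) (hm1 : 1 ≤ m)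
    (dbar : ℝ) (hdbar : dbar = 2 * m / n)
    (hαε : α < ε)
    (hfar : ∀ H : SimpleGraph V, H.Connected →
      ε * m ≤ ((symmDiff G.edgeSet H.edgeSet).ncard : ℝ))
    (D : Finset (V × Sym2 V))
    (hDcard : (D.card : ℝ) ≤ 2 * α * m) :
    (ε - α) * m / 2 ≤
      (({C : G.ConnectedComponent |
          (C.supp.ncard : ℝ) ≤ 4 / ((ε - α) * dbar) ∧
          ({p : V × Sym2 V | p ∈ D ∧ G.connectedComponentMk p.1 = C}).ncard ≤ 1}).ncard : ℝ) := by
  set s := 4 / ((ε - α) * dbar) with hs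
  have hn0 : (0 : ℝ) < n := by rw [hn]; exact_mod_cast Fintype.card_pos
  have hs0 : 0 < s := by
    have : (0 : ℝ) < m := by exact_mod_cast hm1
    have := sub_pos.2 hαε
    rw [hs, hdbar]; positivity
  have hn_div_s : n / s = (ε - α) * m / 2 := by rw [hs, hdbar]; field_simp; ring
  have hcomponents : ε * m + 1 ≤ (Nat.card G.ConnectedComponent : ℝ) := by
    obtain ⟨H, hH, hcard⟩ := G.exists_connected_ncard_symmDiff_edgeSet_add_one
    rw [← hcard]; push_cast; linarith [hfar H hH]
  have hlarge := G.ncard_setOf_lt_ncard_supp_mul_le hs0.le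
  rw [Nat.card_eq_fintype_card, ← hn, ← le_div_iff₀ hs0, hn_div_s] at hlarge
  have hmarked := Set.ncard_setOf_one_lt_ncard_fiber_mul_two_le D.finite_toSet
    (G.connectedComponentMk ∘ Prod.fst)
  simp only [Finset.mem_coe, Function.comp_apply, Set.ncard_coe_finset] at hmarked
  have hsplit := Set.card_le_ncard_setOf_and_add_ncard_add_ncard
    (fun C : G.ConnectedComponent => (C.supp.ncard : ℝ) ≤ s)
    (fun C => ({p : V × Sym2 V | p ∈ D ∧ G.connectedComponentMk p.1 = C}).ncard ≤ 1)
  simp only [not_le] at hsplit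
  have := (Nat.cast_le (α := ℝ)).2 hsplit
  push_cast at this
  linarith

/-- If an `ε`-far-from-connected graph `G` with `m ≥ 1` edges and average degree
`d̄ = 2m/n` has marked incidences `D` with `|D| ≤ 2α·m`, where `0 ≤ α < ε` and
`ε - α ≥ 4/d̄²`, then the number of connected components with at most
`4/((ε-α)·d̄)` vertices and at most one marked incidence is at least `(ε-α)·m/2`. -/
theorem stmt5 {V : Type*} [Fintype V] [Nonempty V]
    (G : SimpleGraph V) (ε α : ℝ) (m n : ℕ)
    (hn : n = Fintype.card V) (hm : m = G.edgeSet.ncard) (hm1 : 1 ≤ m)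
    (dbar : ℝ) (hdbar : dbar = 2 * m / n)
    (hε : 0 < ε) (hεm : ε * m < n)
    (hα : 0 ≤ α) (hαε : α < ε) (hcase : 4 / dbar ^ 2 ≤ ε - α)
    (hfar : ∀ H : SimpleGraph V, H.Connected →
      ε * m ≤ ((symmDiff G.edgeSet H.edgeSet).ncard : ℝ))
    (D : Finset (V × Sym2 V))
    (hD : ∀ p ∈ D, p.2 ∈ G.edgeSet ∧ p.1 ∈ p.2)
    (hDcard : (D.card : ℝ) ≤ 2 * α * m) :
    (ε - α) * m / 2 ≤
      (({C : G.ConnectedComponent |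
          (C.supp.ncard : ℝ) ≤ 4 / ((ε - α) * dbar) ∧
          ({p : V × Sym2 V | p ∈ D ∧ G.connectedComponentMk p.1 = C}).ncard ≤ 1}).ncard : ℝ) :=
  stmt5_general G ε α m n hn hm1 dbar hdbar hαε hfar D hDcard
end

section
/- Let G be a finite simple graph on a nonempty finite vertex set V of size n, with m ≥ 1 edges, and let d̄ = 2m/n. Let ε, α be reals with 0 < ε, ε·m < n, 0 ≤ α < ε, and ε − α < 4/d̄². Suppose G is ε-far from connected, i.e., every connected simple graph on V differs from G in at least ε·m edges, and let D be a set of incidences of G with |D| ≤ 2α·m. Then the number of connected components C of G such that the sum of the degrees of the vertices of C is at most 4/(ε − α) and C contains at most one marked incidence is at least (ε − α)·m/2. -/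
open Finset SimpleGraph

/-- Auxiliary: an `ε`-far-from-connected graph has more than `ε·m` connected components. -/
theorem aux_component_count {V : Type*} [Fintype V] [Nonempty V] (G : SimpleGraph V)
    (ε : ℝ) (m : ℕ)
    (hfar : ∀ H : SimpleGraph V, H.Connected →
      ε * m ≤ ((symmDiff G.edgeSet H.edgeSet).ncard : ℝ)) :
    ε * m + 1 ≤ (Nat.card G.ConnectedComponent : ℝ) := by
  classical
  obtain ⟨v₀⟩ := ‹Nonempty V›
  set c₀ := G.connectedComponentMk v₀ with hc₀
  have hout : ∀ C : G.ConnectedComponent, G.connectedComponentMk C.out = C := fun C => C.out_eq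
  have houtne : ∀ C : G.ConnectedComponent, C ≠ c₀ → C.out ≠ v₀ := by
    intro C hC h
    exact hC (by rw [← hout C, h, hc₀])
  set S : Set (Sym2 V) := (fun C : G.ConnectedComponent => s(v₀, C.out)) '' {C | C ≠ c₀} with hS
  have hSdiag : ∀ e ∈ S, ¬ e.IsDiag := by
    rintro e ⟨C, hC, rfl⟩ h
    rw [Sym2.mk_isDiag_iff] at h
    exact houtne C hC h.symm
  have hSG : ∀ e ∈ S, e ∉ G.edgeSet := by
    rintro e ⟨C, hC, rfl⟩ he
    rw [SimpleGraph.mem_edgeSet] at he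
    exact hC ((hout C).symm.trans (SimpleGraph.ConnectedComponent.connectedComponentMk_eq_of_adj he).symm)
  set H := G ⊔ SimpleGraph.fromEdgeSet S with hH
  have key : ∀ u : V, H.Reachable u v₀ := by
    intro u
    by_cases h : G.connectedComponentMk u = c₀
    · exact (SimpleGraph.ConnectedComponent.exact h).mono le_sup_left
    · have h1 : G.Reachable u (G.connectedComponentMk u).out :=
        SimpleGraph.ConnectedComponent.exact (by rw [hout])
      have h2 : H.Adj (G.connectedComponentMk u).out v₀ := by
        rw [hH, SimpleGraph.sup_adj, SimpleGraph.fromEdgeSet_adj]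
        refine Or.inr ⟨?_, houtne _ h⟩
        rw [Sym2.eq_swap]
        exact ⟨G.connectedComponentMk u, h, rfl⟩
      exact (h1.mono le_sup_left).trans h2.reachable
  have hHconn : H.Connected := by
    rw [SimpleGraph.connected_iff]
    exact ⟨fun a b => (key a).trans (key b).symm, ⟨v₀⟩⟩
  have hHedge : H.edgeSet = G.edgeSet ∪ S := by
    rw [hH, SimpleGraph.edgeSet_sup, SimpleGraph.edgeSet_fromEdgeSet]
    congr 1
    ext e
    simp only [Set.mem_diff, Set.mem_setOf_eq, and_iff_left_iff_imp]
    exact fun he => hSdiag e he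
  have hsym : symmDiff G.edgeSet H.edgeSet = S := by
    rw [hHedge, symmDiff_def]
    ext e
    simp only [Set.sup_eq_union, Set.mem_union, Set.mem_diff]
    constructor
    · rintro (⟨he, hne⟩ | ⟨he | he, hne⟩)
      · exact absurd (Or.inl he) hne
      · exact absurd he hne
      · exact he
    · intro he
      exact Or.inr ⟨Or.inr he, hSG e he⟩
  have hinj : Set.InjOn (fun C : G.ConnectedComponent => s(v₀, C.out)) {C | C ≠ c₀} := by
    intro C hC C' hC' h
    simp only at h
    rw [← hout C, ← hout C', Sym2.congr_right.mp h]
  have hScard : S.ncard = Nat.card G.ConnectedComponent - 1 := by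
    rw [hS, Set.ncard_image_of_injOn hinj]
    have h2 := Set.ncard_add_ncard_compl ({c₀} : Set G.ConnectedComponent)
      (Set.toFinite _) (Set.toFinite _)
    rw [Set.ncard_singleton] at h2
    have h1 : ({C : G.ConnectedComponent | C ≠ c₀}).ncard
        = (({c₀}ᶜ : Set G.ConnectedComponent)).ncard := rfl
    omega
  haveI : Nonempty G.ConnectedComponent := ⟨c₀⟩
  have hcard1 : 1 ≤ Nat.card G.ConnectedComponent := Nat.card_pos
  have := hfar H hHconn
  rw [hsym, hScard] at this
  rw [Nat.cast_sub hcard1] at this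
  push_cast at this ⊢
  linarith

/-- If an `ε`-far-from-connected graph `G` with `m ≥ 1` edges and average degree
`d̄ = 2m/n` has marked incidences `D` with `|D| ≤ 2α·m`, where `0 ≤ α < ε` and
`ε - α < 4/d̄²`, then the number of connected components whose representation length
(sum of degrees of its vertices) is at most `4/(ε-α)` and which contain at most one
marked incidence is at least `(ε-α)·m/2`. -/
theorem stmt6 {V : Type*} [Fintype V] [DecidableEq V] [Nonempty V]
    (G : SimpleGraph V) [DecidableRel G.Adj] (ε α : ℝ) (m n : ℕ)
    (hn : n = Fintype.card V) (hm : m = G.edgeSet.ncard) (hm1 : 1 ≤ m)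
    (dbar : ℝ) (hdbar : dbar = 2 * m / n)
    (hε : 0 < ε) (hεm : ε * m < n)
    (hα : 0 ≤ α) (hαε : α < ε) (hcase : ε - α < 4 / dbar ^ 2)
    (hfar : ∀ H : SimpleGraph V, H.Connected →
      ε * m ≤ ((symmDiff G.edgeSet H.edgeSet).ncard : ℝ))
    (D : Finset (V × Sym2 V))
    (hD : ∀ p ∈ D, p.2 ∈ G.edgeSet ∧ p.1 ∈ p.2)
    (hDcard : (D.card : ℝ) ≤ 2 * α * m) :
    (ε - α) * m / 2 ≤
      (({C : G.ConnectedComponent |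
          ((∑ v ∈ {v : V | v ∈ C.supp}.toFinset, G.degree v : ℕ) : ℝ) ≤ 4 / (ε - α) ∧
          ({p : V × Sym2 V | p ∈ D ∧ G.connectedComponentMk p.1 = C}).ncard ≤ 1}).ncard : ℝ) := by
  classical
  haveI : Fintype G.ConnectedComponent := Fintype.ofFinite _
  set ι := G.ConnectedComponent
  have hεα : (0:ℝ) < ε - α := sub_pos.2 hαε
  -- representation length
  set rep : ι → ℕ := fun C => ∑ v ∈ {v : V | v ∈ C.supp}.toFinset, G.degree v with hrep
  have hsuppfin : ∀ C : ι, {v : V | v ∈ C.supp}.toFinset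
      = Finset.univ.filter (fun v => G.connectedComponentMk v = C) := by
    intro C
    ext v
    simp [SimpleGraph.ConnectedComponent.mem_supp_iff]
  have hrepsum : ∑ C : ι, rep C = 2 * m := by
    have : ∑ C : ι, rep C = ∑ v : V, G.degree v := by
      rw [hrep]
      simp_rw [hsuppfin]
      exact Finset.sum_fiberwise _ _ _
    rw [this, SimpleGraph.sum_degrees_eq_twice_card_edges, hm, ← SimpleGraph.coe_edgeFinset,
      Set.ncard_coe_finset]
  -- marks
  set mark : ι → ℕ := fun C => (D.filter (fun p => G.connectedComponentMk p.1 = C)).card with hmark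
  have hmarkeq : ∀ C : ι,
      ({p : V × Sym2 V | p ∈ D ∧ G.connectedComponentMk p.1 = C}).ncard = mark C := by
    intro C
    rw [hmark]
    have : {p : V × Sym2 V | p ∈ D ∧ G.connectedComponentMk p.1 = C}
        = ↑(D.filter (fun p => G.connectedComponentMk p.1 = C)) := by
      ext p; simp
    rw [this, Set.ncard_coe_finset]
  have hmarksum : ∑ C : ι, mark C = D.card := by
    rw [hmark]
    exact (Finset.card_eq_sum_card_fiberwise (fun x _ => Finset.mem_univ _)).symm
  -- the three finsets
  set good : Finset ι := Finset.univ.filter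
      (fun C => ((rep C : ℕ) : ℝ) ≤ 4 / (ε - α) ∧ mark C ≤ 1) with hgood
  set heavy : Finset ι := Finset.univ.filter (fun C => 4 / (ε - α) < ((rep C : ℕ) : ℝ)) with hheavy
  set multi : Finset ι := Finset.univ.filter (fun C => 2 ≤ mark C) with hmulti
  have hcover : (Finset.univ : Finset ι) ⊆ good ∪ heavy ∪ multi := by
    intro C _
    simp only [hgood, hheavy, hmulti, Finset.mem_union, Finset.mem_filter, Finset.mem_univ,
      true_and]
    by_cases h1 : ((rep C : ℕ) : ℝ) ≤ 4 / (ε - α)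
    · by_cases h2 : mark C ≤ 1
      · exact Or.inl (Or.inl ⟨h1, h2⟩)
      · exact Or.inr (by omega)
    · exact Or.inl (Or.inr (lt_of_not_ge h1))
  have hcardle : Fintype.card ι ≤ good.card + heavy.card + multi.card := by
    calc Fintype.card ι = (Finset.univ : Finset ι).card := rfl
      _ ≤ (good ∪ heavy ∪ multi).card := Finset.card_le_card hcover
      _ ≤ (good ∪ heavy).card + multi.card := Finset.card_union_le _ _
      _ ≤ good.card + heavy.card + multi.card := by
          have := Finset.card_union_le good heavy
          omega
  -- heavy bound
  have hheavybound : (heavy.card : ℝ) ≤ (ε - α) * m / 2 := by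
    have h1 : (4 / (ε - α)) * heavy.card ≤ 2 * m := by
      have h2 : ∑ C ∈ heavy, (4 / (ε - α) : ℝ) ≤ ∑ C ∈ heavy, ((rep C : ℕ) : ℝ) := by
        apply Finset.sum_le_sum
        intro C hC
        rw [hheavy, Finset.mem_filter] at hC
        exact hC.2.le
      have h3 : ∑ C ∈ heavy, ((rep C : ℕ) : ℝ) ≤ ∑ C : ι, ((rep C : ℕ) : ℝ) := by
        apply Finset.sum_le_sum_of_subset_of_nonneg (Finset.subset_univ _)
        intro C _ _
        positivity
      have h4 : ∑ C : ι, ((rep C : ℕ) : ℝ) = 2 * m := by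
        rw [← Nat.cast_sum]
        rw [hrepsum]
        push_cast
        ring
      rw [Finset.sum_const, nsmul_eq_mul] at h2
      linarith
    have h5 : 4 * (heavy.card : ℝ) ≤ 2 * m * (ε - α) := by
      have h6 := mul_le_mul_of_nonneg_right h1 hεα.le
      calc 4 * (heavy.card : ℝ) = 4 / (ε - α) * heavy.card * (ε - α) := by
            field_simp
        _ ≤ 2 * m * (ε - α) := h6
    linarith
  -- multi bound
  have hmultibound : (multi.card : ℝ) ≤ α * m := by
    have h1 : 2 * multi.card ≤ D.card := by
      calc 2 * multi.card = ∑ _C ∈ multi, 2 := by rw [Finset.sum_const]; ring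
        _ ≤ ∑ C ∈ multi, mark C := by
            apply Finset.sum_le_sum
            intro C hC
            rw [hmulti, Finset.mem_filter] at hC
            exact hC.2
        _ ≤ ∑ C : ι, mark C :=
            Finset.sum_le_sum_of_subset_of_nonneg (Finset.subset_univ _)
              (fun _ _ _ => Nat.zero_le _)
        _ = D.card := hmarksum
    have h2 : (2 * multi.card : ℝ) ≤ (D.card : ℝ) := by exact_mod_cast h1
    linarith
  -- component count
  have hcount : ε * m + 1 ≤ (Fintype.card ι : ℝ) := by
    have := aux_component_count G ε m hfar
    rwa [Nat.card_eq_fintype_card] at this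
  -- identify the goal set with `good`
  have hgoaleq : ({C : ι |
      ((∑ v ∈ {v : V | v ∈ C.supp}.toFinset, G.degree v : ℕ) : ℝ) ≤ 4 / (ε - α) ∧
      ({p : V × Sym2 V | p ∈ D ∧ G.connectedComponentMk p.1 = C}).ncard ≤ 1}).ncard
      = good.card := by
    have : {C : ι |
        ((∑ v ∈ {v : V | v ∈ C.supp}.toFinset, G.degree v : ℕ) : ℝ) ≤ 4 / (ε - α) ∧
        ({p : V × Sym2 V | p ∈ D ∧ G.connectedComponentMk p.1 = C}).ncard ≤ 1} = ↑good := by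
      ext C
      simp only [Set.mem_setOf_eq, hgood, Finset.coe_filter, Finset.mem_univ, true_and]
      rw [hmarkeq C]
    rw [this, Set.ncard_coe_finset]
  rw [hgoaleq]
  have hfinal : (Fintype.card ι : ℝ) ≤ good.card + heavy.card + multi.card := by
    exact_mod_cast hcardle
  linarith
end

section
/- Let G be a finite simple graph with m ≥ 1 edges, let ε ∈ (0, 1) be real, and let m̂ be a real number with m̂ ≥ m/8. Then the number of vertices of G whose degree is greater than 4·√(2m̂/ε) is strictly less than √(ε·m). -/
/-- In a graph with `m ≥ 1` edges, if `m̂ ≥ m/8` and `ε ∈ (0,1)`, then the number of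
vertices of degree greater than `4·√(2m̂/ε)` is strictly less than `√(ε·m)`. -/
theorem stmt10 {V : Type*} [Fintype V]
    (G : SimpleGraph V) [DecidableRel G.Adj]
    (m : ℕ) (hm : m = G.edgeSet.ncard) (hm1 : 1 ≤ m)
    (ε : ℝ) (hε : 0 < ε) (hε1 : ε < 1)
    (mhat : ℝ) (hmhat : (m : ℝ) / 8 ≤ mhat) :
    ((Finset.univ.filter
        (fun v : V => 4 * Real.sqrt (2 * mhat / ε) < (G.degree v : ℝ))).card : ℝ)
      < Real.sqrt (ε * m) := by
  classical
  set T : ℝ := Real.sqrt (2 * mhat / ε) with hT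
  set S : Finset V := Finset.univ.filter (fun v : V => 4 * T < (G.degree v : ℝ)) with hS
  have hmpos : (0 : ℝ) < m := by exact_mod_cast hm1
  have hεm_pos : (0 : ℝ) < Real.sqrt (ε * m) :=
    Real.sqrt_pos.mpr (by positivity)
  have hsqrt4 : Real.sqrt 4 = 2 := by
    rw [show (4 : ℝ) = 2 ^ 2 by norm_num, Real.sqrt_sq (by norm_num)]
  have hsqrt16 : Real.sqrt 16 = 4 := by
    rw [show (16 : ℝ) = 4 ^ 2 by norm_num, Real.sqrt_sq (by norm_num)]
  -- 2√(m/ε) ≤ 4T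
  have hTge : 2 * Real.sqrt ((m : ℝ) / ε) ≤ 4 * T := by
    have hk : (4 : ℝ) * ((m : ℝ) / ε) ≤ 16 * (2 * mhat / ε) := by
      calc (4 : ℝ) * ((m : ℝ) / ε) = (4 * m) / ε := by ring
        _ ≤ (32 * mhat) / ε := (div_le_div_iff_of_pos_right hε).mpr (by linarith)
        _ = 16 * (2 * mhat / ε) := by ring
    calc 2 * Real.sqrt ((m : ℝ) / ε) = Real.sqrt (4 * ((m : ℝ) / ε)) := by
          rw [Real.sqrt_mul (by norm_num), hsqrt4]
      _ ≤ Real.sqrt (16 * (2 * mhat / ε)) := Real.sqrt_le_sqrt hk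
      _ = 4 * T := by rw [Real.sqrt_mul (by norm_num), hsqrt16]
  have hsqrt_pos : (0 : ℝ) < Real.sqrt ((m : ℝ) / ε) :=
    Real.sqrt_pos.mpr (by positivity)
  -- product identity : √(εm) * √(m/ε) = m
  have hprod : Real.sqrt (ε * m) * Real.sqrt ((m : ℝ) / ε) = m := by
    rw [← Real.sqrt_mul (by positivity)]
    rw [show ε * m * ((m : ℝ) / ε) = (m : ℝ) ^ 2 by field_simp]
    exact Real.sqrt_sq hmpos.le
  -- sum of degrees = 2m
  have hdeg : ∑ v : V, G.degree v = 2 * m := by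
    rw [hm, SimpleGraph.sum_degrees_eq_twice_card_edges]
    congr 1
    simp [Set.ncard_eq_toFinset_card', SimpleGraph.edgeFinset]
  rcases S.eq_empty_or_nonempty with hSe | hSne
  · rw [hSe]; simpa using hεm_pos
  -- strict bound: |S| * 4T < sum over S of degrees
  have h1 : (S.card : ℝ) * (4 * T) < ∑ v ∈ S, (G.degree v : ℝ) := by
    have := Finset.sum_lt_sum_of_nonempty hSne
      (f := fun _ => 4 * T) (g := fun v => (G.degree v : ℝ))
      (fun v hv => (Finset.mem_filter.mp hv).2)
    simpa [mul_comm] using this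
  have h2 : ∑ v ∈ S, (G.degree v : ℝ) ≤ 2 * m := by
    have : ∑ v ∈ S, (G.degree v : ℝ) ≤ ∑ v : V, (G.degree v : ℝ) :=
      Finset.sum_le_sum_of_subset_of_nonneg (Finset.subset_univ S)
        (fun v _ _ => by positivity)
    calc ∑ v ∈ S, (G.degree v : ℝ) ≤ ∑ v : V, (G.degree v : ℝ) := this
      _ = 2 * m := by exact_mod_cast congrArg Nat.cast hdeg
  have h3 : (S.card : ℝ) * (2 * Real.sqrt ((m : ℝ) / ε)) < 2 * m := by
    calc (S.card : ℝ) * (2 * Real.sqrt ((m : ℝ) / ε))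
        ≤ (S.card : ℝ) * (4 * T) := by
          apply mul_le_mul_of_nonneg_left hTge (by positivity)
      _ < 2 * m := lt_of_lt_of_le h1 h2
  -- conclude
  have := h3
  rw [show (2 : ℝ) * m = Real.sqrt (ε * m) * (2 * Real.sqrt ((m : ℝ) / ε)) by
       rw [← mul_assoc, mul_comm (Real.sqrt (ε * m)) 2, mul_assoc, hprod]] at this
  exact lt_of_mul_lt_mul_right this (by positivity)
end

section
/- Let G be a finite simple graph on a finite vertex set V of size n, with m ≥ 1 edges, and let ε ∈ (0, 1/2) and α ∈ [0, 1] be reals. Let ≺ be a linear order on V such that deg(u) < deg(v) implies u ≺ v. For each vertex u let Er(u) ⊆ N(u) be a set of erased neighbors, with ∑_{u ∈ V} |Er(u)| ≤ 2α·m, and define d⁺(u) = |{v ∈ N(u) \ Er(u) : u ≺ v}| and d⊥(u) = |Er(u)|. Let H = {u ∈ V : deg(u) > T} for some real threshold T, and suppose |H| ≤ √(ε·m). Then (1 − ε/2)·m < ∑_{u ∈ V \ H} (d⁺(u) + d⊥(u)) ≤ (1 + 2·min(α, 1/2))·m. -/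
open Finset

private lemma aux_comm {V : Type*} [Fintype V] [LinearOrder V]
    (adj : V → V → Prop) [DecidableRel adj] (hsymm : ∀ u v, adj u v → adj v u)
    (A : Finset V) :
    ∑ u ∈ A, (A.filter (fun v => adj u v ∧ u < v)).card
      = ∑ u ∈ A, (A.filter (fun v => adj u v ∧ v < u)).card := by
  simp only [Finset.card_filter]
  rw [Finset.sum_comm]
  exact Finset.sum_congr rfl fun x _ => Finset.sum_congr rfl fun y _ =>
    if_congr ⟨fun h => ⟨hsymm _ _ h.1, h.2⟩, fun h => ⟨hsymm _ _ h.1, h.2⟩⟩ rfl rfl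

private lemma two_mul_sum_lt {V : Type*} [Fintype V] [LinearOrder V] (A : Finset V) :
    2 * ∑ u ∈ A, (A.filter (fun v => u < v)).card + A.card = A.card * A.card := by
  have e1 : ∀ u : V, A.filter (fun v => (u ≠ v) ∧ u < v) = A.filter (fun v => u < v) :=
    fun u => Finset.filter_congr (fun v _ => ⟨fun h => h.2, fun h => ⟨h.ne, h⟩⟩)
  have e2 : ∀ u : V, A.filter (fun v => (u ≠ v) ∧ v < u) = A.filter (fun v => v < u) :=
    fun u => Finset.filter_congr (fun v _ => ⟨fun h => h.2, fun h => ⟨h.ne', h⟩⟩)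
  have h1 : ∑ u ∈ A, (A.filter (fun v => u < v)).card
      = ∑ u ∈ A, (A.filter (fun v => v < u)).card := by
    have := aux_comm (fun a b : V => a ≠ b) (fun u v h => h.symm) A
    simpa only [e1, e2] using this
  have key : ∀ u ∈ A, (A.filter (fun v => u < v)).card
      + (A.filter (fun v => v < u)).card + 1 = A.card := by
    intro u hu
    have hdis : Disjoint (A.filter (fun v => u < v)) (A.filter (fun v => v < u)) := by
      rw [Finset.disjoint_filter]
      intro x _ h1 h2
      exact absurd (h1.trans h2) (lt_irrefl u)
    have hun : A.filter (fun v => u < v) ∪ A.filter (fun v => v < u) = A.erase u := by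
      rw [← Finset.filter_or, ← Finset.filter_ne A u]
      exact Finset.filter_congr (fun v _ => lt_or_lt_iff_ne)
    rw [← Finset.card_union_of_disjoint hdis, hun, Finset.card_erase_of_mem hu,
      Nat.sub_add_cancel (Finset.card_pos.mpr ⟨u, hu⟩)]
  calc 2 * ∑ u ∈ A, (A.filter (fun v => u < v)).card + A.card
      = ∑ u ∈ A, ((A.filter (fun v => u < v)).card + (A.filter (fun v => v < u)).card + 1) := by
        rw [Finset.sum_add_distrib, Finset.sum_add_distrib, ← h1, Finset.sum_const,
          smul_eq_mul, mul_one, two_mul, add_assoc]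
    _ = A.card * A.card := by rw [Finset.sum_congr rfl key, Finset.sum_const, smul_eq_mul]

private lemma sum_dplus {V : Type*} [Fintype V] [LinearOrder V]
    (G : SimpleGraph V) [DecidableRel G.Adj] :
    ∑ u : V, ((G.neighborFinset u).filter (fun v => u < v)).card = G.edgeFinset.card := by
  have h1 : ∑ u : V, ((G.neighborFinset u).filter (fun v => u < v)).card
      = ∑ u : V, ((G.neighborFinset u).filter (fun v => v < u)).card := by
    have := aux_comm G.Adj (fun u v h => h.symm) Finset.univ
    simpa only [SimpleGraph.neighborFinset_eq_filter, Finset.filter_filter] using this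
  have key : ∀ u : V, ((G.neighborFinset u).filter (fun v => u < v)).card
      + ((G.neighborFinset u).filter (fun v => v < u)).card = G.degree u := by
    intro u
    have hdis : Disjoint ((G.neighborFinset u).filter (fun v => u < v))
        ((G.neighborFinset u).filter (fun v => v < u)) := by
      rw [Finset.disjoint_filter]
      intro x _ ha hb
      exact absurd (ha.trans hb) (lt_irrefl u)
    rw [← Finset.card_union_of_disjoint hdis, ← Finset.filter_or,
      Finset.filter_true_of_mem, SimpleGraph.degree]
    intro v hv
    exact lt_or_lt_iff_ne.mpr ((SimpleGraph.mem_neighborFinset G u v).mp hv).ne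
  have h2 : 2 * ∑ u : V, ((G.neighborFinset u).filter (fun v => u < v)).card
      = 2 * G.edgeFinset.card := by
    rw [← SimpleGraph.sum_degrees_eq_twice_card_edges, ← Finset.sum_congr rfl (fun u _ => key u),
      Finset.sum_add_distrib, ← h1, two_mul]
  exact Nat.eq_of_mul_eq_mul_left (by norm_num) h2

/-- Key expectation bound for the erasure-resilient average-degree estimator: for a
degree-compatible linear order, erasure sets `Er u` with total size at most `2α·m`,
`d⁺(u)` the number of nonerased neighbors of `u` above `u`, `d⊥(u) = |Er u|`, and `H`
the set of vertices of degree greater than `T` with `|H| ≤ √(ε·m)`, we have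
`(1 - ε/2)·m < ∑_{u ∉ H} (d⁺(u) + d⊥(u)) ≤ (1 + 2·min(α,1/2))·m`. -/
theorem stmt11 {V : Type*} [Fintype V] [LinearOrder V]
    (G : SimpleGraph V) [DecidableRel G.Adj]
    (n m : ℕ) (hn : n = Fintype.card V) (hm : m = G.edgeSet.ncard) (hm1 : 1 ≤ m)
    (ε α : ℝ) (hε : 0 < ε) (hε2 : ε < 1 / 2) (hα0 : 0 ≤ α) (hα1 : α ≤ 1)
    (hord : ∀ u v : V, G.degree u < G.degree v → u < v)
    (Er : V → Finset V) (hEr : ∀ u, Er u ⊆ G.neighborFinset u)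
    (hErcard : ((∑ u : V, (Er u).card : ℕ) : ℝ) ≤ 2 * α * m)
    (T : ℝ)
    (hH : ((Finset.univ.filter (fun u : V => T < (G.degree u : ℝ))).card : ℝ)
      ≤ Real.sqrt (ε * m)) :
    (1 - ε / 2) * m <
      ((∑ u ∈ Finset.univ \ Finset.univ.filter (fun u : V => T < (G.degree u : ℝ)),
          (((G.neighborFinset u \ Er u).filter (fun v => u < v)).card
            + (Er u).card) : ℕ) : ℝ)
    ∧ ((∑ u ∈ Finset.univ \ Finset.univ.filter (fun u : V => T < (G.degree u : ℝ)),
          (((G.neighborFinset u \ Er u).filter (fun v => u < v)).card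
            + (Er u).card) : ℕ) : ℝ)
      ≤ (1 + 2 * min α (1 / 2)) * m := by
  classical
  set H : Finset V := Finset.univ.filter (fun u : V => T < (G.degree u : ℝ)) with hHdef
  set S : ℕ := ∑ u ∈ Finset.univ \ H,
      (((G.neighborFinset u \ Er u).filter (fun v => u < v)).card + (Er u).card) with hSdef
  have hme : m = G.edgeFinset.card := by
    rw [hm, ← SimpleGraph.coe_edgeFinset, Set.ncard_coe_finset]
  have hmpos : (0:ℝ) < m := by exact_mod_cast hm1
  -- d' below
  set d' : V → ℕ := fun u => ((G.neighborFinset u).filter (fun v => u < v)).card with hd'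
  have hsum_d' : ∑ u : V, d' u = m := by rw [hme]; exact sum_dplus G
  -- upper bounds
  have hub1 : (S : ℝ) ≤ (m : ℝ) + (∑ u : V, (Er u).card : ℕ) := by
    have hnat : S ≤ (∑ u : V, d' u) + ∑ u : V, (Er u).card := by
      calc S ≤ ∑ u : V, (((G.neighborFinset u \ Er u).filter (fun v => u < v)).card
            + (Er u).card) :=
          Finset.sum_le_sum_of_subset (Finset.sdiff_subset)
        _ = (∑ u : V, ((G.neighborFinset u \ Er u).filter (fun v => u < v)).card)
            + ∑ u : V, (Er u).card := Finset.sum_add_distrib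
        _ ≤ (∑ u : V, d' u) + ∑ u : V, (Er u).card := by
            refine Nat.add_le_add_right (Finset.sum_le_sum fun u _ => ?_) _
            exact Finset.card_le_card
              (Finset.filter_subset_filter _ (Finset.sdiff_subset))
    have := hnat
    rw [hsum_d'] at this
    exact_mod_cast this
  have hub2 : (S : ℝ) ≤ 2 * m := by
    have hnat : S ≤ 2 * m := by
      calc S ≤ ∑ u : V, (((G.neighborFinset u \ Er u).filter (fun v => u < v)).card
            + (Er u).card) := Finset.sum_le_sum_of_subset (Finset.sdiff_subset)
        _ ≤ ∑ u : V, G.degree u := by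
            refine Finset.sum_le_sum fun u _ => ?_
            calc ((G.neighborFinset u \ Er u).filter (fun v => u < v)).card + (Er u).card
                ≤ (G.neighborFinset u \ Er u).card + (Er u).card :=
                  Nat.add_le_add_right (Finset.card_filter_le _ _) _
              _ = G.degree u := Finset.card_sdiff_add_card_eq_card (hEr u)
        _ = 2 * m := by rw [SimpleGraph.sum_degrees_eq_twice_card_edges, hme]
    exact_mod_cast hnat
  -- lower bound
  have hd'H : ∀ u ∈ H, d' u ≤ (H.filter (fun v => u < v)).card := by
    intro u hu
    refine Finset.card_le_card fun v hv => ?_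
    simp only [Finset.mem_filter, SimpleGraph.mem_neighborFinset] at hv
    refine Finset.mem_filter.mpr ⟨Finset.mem_filter.mpr ⟨Finset.mem_univ _, ?_⟩, hv.2⟩
    have hTu : T < (G.degree u : ℝ) := (Finset.mem_filter.mp hu).2
    have hdeg : G.degree u ≤ G.degree v := by
      by_contra hc
      exact absurd (hord v u (lt_of_not_ge hc)) (not_lt.mpr hv.2.le)
    calc T < (G.degree u : ℝ) := hTu
      _ ≤ (G.degree v : ℝ) := by exact_mod_cast hdeg
  set L : ℕ := ∑ u ∈ H, d' u with hL
  have hsplit : ∑ u ∈ Finset.univ \ H, d' u + L = m := by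
    rw [hL, Finset.sum_sdiff (Finset.subset_univ H), hsum_d']
  have hSge : (∑ u ∈ Finset.univ \ H, d' u) ≤ S := by
    refine Finset.sum_le_sum fun u _ => ?_
    have hsub : (G.neighborFinset u).filter (fun v => u < v)
        ⊆ ((G.neighborFinset u \ Er u).filter (fun v => u < v)) ∪ Er u := by
      intro v hv
      simp only [Finset.mem_filter] at hv
      by_cases he : v ∈ Er u
      · exact Finset.mem_union_right _ he
      · exact Finset.mem_union_left _
          (Finset.mem_filter.mpr ⟨Finset.mem_sdiff.mpr ⟨hv.1, he⟩, hv.2⟩)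
    calc d' u ≤ (((G.neighborFinset u \ Er u).filter (fun v => u < v)) ∪ Er u).card :=
        Finset.card_le_card hsub
      _ ≤ _ := Finset.card_union_le _ _
  have hLlt : 2 * (L : ℝ) < ε * m := by
    have h2L' : 2 * (∑ u ∈ H, (H.filter (fun v => u < v)).card) + H.card
        = H.card * H.card := two_mul_sum_lt H
    have hLle : L ≤ ∑ u ∈ H, (H.filter (fun v => u < v)).card :=
      Finset.sum_le_sum hd'H
    have hcast : 2 * (L : ℝ) + H.card ≤ (H.card : ℝ) * H.card := by
      have : 2 * L + H.card ≤ H.card * H.card :=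
        h2L' ▸ Nat.add_le_add_right (Nat.mul_le_mul_left 2 hLle) H.card
      exact_mod_cast this
    have hh2 : (H.card : ℝ) * H.card ≤ ε * m := by
      have h0 : (0:ℝ) ≤ ε * m := by positivity
      calc (H.card : ℝ) * H.card ≤ Real.sqrt (ε * m) * Real.sqrt (ε * m) :=
          mul_le_mul hH hH (by positivity) (Real.sqrt_nonneg _)
        _ = ε * m := Real.mul_self_sqrt h0
    rcases Nat.eq_zero_or_pos H.card with h0 | h1
    · have : L = 0 := by rw [hL, Finset.card_eq_zero.mp h0, Finset.sum_empty]
      rw [this]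
      simpa using mul_pos hε hmpos
    · have h1' : (1:ℝ) ≤ H.card := by exact_mod_cast h1
      linarith
  have hlower : (1 - ε / 2) * m < (S : ℝ) := by
    have h1 : ((∑ u ∈ Finset.univ \ H, d' u : ℕ) : ℝ) = (m : ℝ) - L := by
      have := hsplit
      have : ((∑ u ∈ Finset.univ \ H, d' u : ℕ) : ℝ) + L = m := by exact_mod_cast this
      linarith
    have h2 : ((∑ u ∈ Finset.univ \ H, d' u : ℕ) : ℝ) ≤ S := by exact_mod_cast hSge
    nlinarith
  refine ⟨hlower, ?_⟩
  rcases le_or_gt α (1/2) with hcase | hcase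
  · rw [min_eq_left hcase]
    calc (S:ℝ) ≤ (m : ℝ) + (∑ u : V, (Er u).card : ℕ) := hub1
      _ ≤ m + 2 * α * m := by linarith [hErcard]
      _ = (1 + 2 * α) * m := by ring
  · rw [min_eq_right hcase.le]
    calc (S:ℝ) ≤ 2 * m := hub2
      _ = (1 + 2 * (1/2 : ℝ)) * m := by ring
end

section
/- Let t ≥ 3 and let k ≥ 2 be an even integer, and let G be the simple graph on the vertex set (Fin k × Fin t) ⊕ Unit consisting of k disjoint cycles of length t (vertex (i, j) adjacent to (i, j+1 mod t)), a perfect matching on the designated vertices given by a fixed-point-free involution σ on Fin k (each (i, 0) adjacent to (σ(i), 0)), and an isolated extra vertex. Then every connected simple graph H on the same vertex set satisfies |E(G) Δ E(H)| ≥ k/2, i.e., G differs from every connected graph in at least k/2 edges. -/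
open SimpleGraph

variable {V : Type*}

lemma merge_reach (G : SimpleGraph V) (a b u v : V)
    (h : (G ⊔ SimpleGraph.fromEdgeSet {s(a,b)}).Reachable u v) :
    G.Reachable u v ∨ (G.Reachable u a ∧ G.Reachable b v) ∨
      (G.Reachable u b ∧ G.Reachable a v) := by
  rw [SimpleGraph.reachable_iff_reflTransGen] at h
  induction h with
  | refl => exact Or.inl (Reachable.refl u)
  | tail _ hadj ih =>
    rename_i x y _
    rw [SimpleGraph.sup_adj, SimpleGraph.fromEdgeSet_adj] at hadj
    rcases hadj with hadj | ⟨he, hne⟩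
    · rcases ih with h1 | ⟨h1, h2⟩ | ⟨h1, h2⟩
      · exact Or.inl (h1.trans hadj.reachable)
      · exact Or.inr (Or.inl ⟨h1, h2.trans hadj.reachable⟩)
      · exact Or.inr (Or.inr ⟨h1, h2.trans hadj.reachable⟩)
    · simp only [Set.mem_singleton_iff, Sym2.eq, Sym2.rel_iff', Prod.mk.injEq,
        Prod.swap_prod_mk] at he
      rcases he with ⟨rfl, rfl⟩ | ⟨rfl, rfl⟩
      · rcases ih with h1 | ⟨h1, h2⟩ | ⟨h1, h2⟩
        · exact Or.inr (Or.inl ⟨h1, Reachable.refl _⟩)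
        · exact Or.inl (h1.trans h2.symm)
        · exact Or.inl h1
      · rcases ih with h1 | ⟨h1, h2⟩ | ⟨h1, h2⟩
        · exact Or.inr (Or.inr ⟨h1, Reachable.refl _⟩)
        · exact Or.inl h1
        · exact Or.inl (h1.trans h2.symm)

lemma aux_count [DecidableEq V] (H : SimpleGraph V) (hH : H.Preconnected) :
    ∀ (n : ℕ) (G : SimpleGraph V) (D : Finset (Sym2 V)), D.card = n →
      (H.edgeSet \ G.edgeSet ⊆ ↑D) →
      ∀ s : Finset V, ((s : Set V).Pairwise fun u v => ¬ G.Reachable u v) →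
      s.card ≤ n + 1 := by
  intro n
  induction n with
  | zero =>
    intro G D hD hsub s hs
    rw [Finset.card_eq_zero] at hD
    subst hD
    simp only [Finset.coe_empty, Set.subset_empty_iff, Set.diff_eq_empty] at hsub
    have hGp : G.Preconnected := hH.mono (SimpleGraph.edgeSet_subset_edgeSet.mp hsub)
    by_contra hc
    obtain ⟨x, hx, y, hy, hxy⟩ := Finset.one_lt_card.mp (show 1 < s.card by omega)
    exact hs hx hy hxy (hGp x y)
  | succ n ih =>
    intro G D hD hsub s hs
    by_cases hE : H.edgeSet \ G.edgeSet = ∅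
    · rw [Set.diff_eq_empty] at hE
      have hGp : G.Preconnected := hH.mono (SimpleGraph.edgeSet_subset_edgeSet.mp hE)
      by_contra hc
      obtain ⟨x, hx, y, hy, hxy⟩ := Finset.one_lt_card.mp (show 1 < s.card by omega)
      exact hs hx hy hxy (hGp x y)
    · obtain ⟨e, he⟩ := Set.nonempty_iff_ne_empty.mpr hE
      induction e with
      | _ a b =>
      have hab : a ≠ b := (H.mem_edgeSet.mp he.1).ne
      have heD : s(a,b) ∈ D := hsub he
      set G' := G ⊔ SimpleGraph.fromEdgeSet {s(a,b)} with hG'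
      have hsub' : H.edgeSet \ G'.edgeSet ⊆ ↑(D.erase s(a,b)) := by
        intro x hx
        simp only [hG', SimpleGraph.edgeSet_sup, SimpleGraph.edgeSet_fromEdgeSet,
          Set.mem_diff, Set.mem_union] at hx
        have hxG : x ∈ H.edgeSet \ G.edgeSet := ⟨hx.1, fun h => hx.2 (Or.inl h)⟩
        have hxe : x ≠ s(a,b) := by
          intro h
          subst h
          exact hx.2 (Or.inr ⟨rfl, by simp [Sym2.isDiag_iff_proj_eq, hab]⟩)
        exact Finset.mem_coe.mpr (Finset.mem_erase.mpr ⟨hxe, hsub hxG⟩)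
      have hcard' : (D.erase s(a,b)).card = n := by
        rw [Finset.card_erase_of_mem heD, hD]
        omega
      by_cases hu : ∃ u ∈ s, G.Reachable u a
      · obtain ⟨u, hus, hua⟩ := hu
        have hs' : ((s.erase u : Finset V) : Set V).Pairwise fun x y => ¬ G'.Reachable x y := by
          intro x hx y hy hxy hr
          simp only [Finset.coe_erase, Set.mem_diff, Finset.mem_coe,
            Set.mem_singleton_iff] at hx hy
          rcases merge_reach G a b x y hr with h1 | ⟨h1, h2⟩ | ⟨h1, h2⟩
          · exact hs hx.1 hy.1 hxy h1
          · exact hs hx.1 hus hx.2 (h1.trans hua.symm)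
          · exact hs hy.1 hus hy.2 (h2.symm.trans hua.symm)
        have := ih G' (D.erase s(a,b)) hcard' hsub' (s.erase u) hs'
        have hce : (s.erase u).card + 1 = s.card := Finset.card_erase_add_one hus
        omega
      · push_neg at hu
        have hs' : ((s : Finset V) : Set V).Pairwise fun x y => ¬ G'.Reachable x y := by
          intro x hx y hy hxy hr
          rcases merge_reach G a b x y hr with h1 | ⟨h1, h2⟩ | ⟨h1, h2⟩
          · exact hs hx hy hxy h1
          · exact hu x hx h1
          · exact hu y hy h2.symm
        have := ih G' (D.erase s(a,b)) hcard' hsub' s hs'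
        omega

/-- The lower-bound graph `G⁻` (k disjoint `t`-cycles with a perfect matching on the
designated vertices given by a fixed-point-free involution `σ`, and one isolated extra
vertex) differs from every connected graph on the same vertex set in at least `k/2`
edges. -/
theorem stmt14 (t k : ℕ) (ht : 3 ≤ t) (hk2 : 2 ≤ k) (hk : Even k)
    (σ : Equiv.Perm (Fin k)) (hσinv : ∀ i, σ (σ i) = i) (hσfix : ∀ i, σ i ≠ i)
    (H : SimpleGraph ((Fin k × Fin t) ⊕ Unit)) (hH : H.Connected) :
    k / 2 ≤
      (symmDiff
        (SimpleGraph.fromRel (fun a b : (Fin k × Fin t) ⊕ Unit =>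
          match a, b with
          | Sum.inl (i, j), Sum.inl (i', j') =>
              (i = i' ∧ j'.val = (j.val + 1) % t) ∨
              (i' = σ i ∧ j.val = 0 ∧ j'.val = 0)
          | _, _ => False)).edgeSet H.edgeSet).ncard := by
  set G := SimpleGraph.fromRel (fun a b : (Fin k × Fin t) ⊕ Unit =>
          match a, b with
          | Sum.inl (i, j), Sum.inl (i', j') =>
              (i = i' ∧ j'.val = (j.val + 1) % t) ∨
              (i' = σ i ∧ j.val = 0 ∧ j'.val = 0)
          | _, _ => False) with hG
  set Δ := symmDiff G.edgeSet H.edgeSet with hΔ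
  -- the class function
  set cl : (Fin k × Fin t) ⊕ Unit → ℕ := fun v =>
    match v with
    | Sum.inl (i, _) => min i.val (σ i).val
    | Sum.inr _ => k with hclp
  have hcl : ∀ u v, G.Adj u v → cl u = cl v := by
    intro u v huv
    rw [hG, SimpleGraph.fromRel_adj] at huv
    obtain ⟨hne, h⟩ := huv
    rcases u with ⟨i, j⟩ | u <;> rcases v with ⟨i', j'⟩ | v
    · rcases h with (⟨rfl, -⟩ | ⟨rfl, -⟩) | (⟨rfl, -⟩ | ⟨rfl, -⟩)
      · rfl
      · simp only [hclp, hσinv]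
        exact (Nat.min_comm _ _)
      · rfl
      · simp only [hclp, hσinv]
        exact (Nat.min_comm _ _).symm
    · rcases h with h | h <;> exact h.elim
    · rcases h with h | h <;> exact h.elim
    · rcases h with h | h <;> exact h.elim
  have hreach : ∀ u v, G.Reachable u v → cl u = cl v := by
    intro u v h
    rw [SimpleGraph.reachable_iff_reflTransGen] at h
    induction h with
    | refl => rfl
    | tail _ hadj ih => exact ih.trans (hcl _ _ hadj)
  -- the representative set
  set A : Finset (Fin k) := Finset.univ.filter (fun i => i.val < (σ i).val) with hA
  set B : Finset (Fin k) := Finset.univ.filter (fun i => (σ i).val < i.val) with hB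
  have hBA : B = A.image σ := by
    ext j
    simp only [hA, hB, Finset.mem_filter, Finset.mem_image, Finset.mem_univ, true_and]
    constructor
    · intro hj
      exact ⟨σ j, by rw [hσinv]; exact hj, hσinv j⟩
    · rintro ⟨i, hi, rfl⟩
      rw [hσinv]; exact hi
  have hcardB : B.card = A.card := by
    rw [hBA, Finset.card_image_of_injective _ σ.injective]
  have hdisj : Disjoint A B := by
    rw [Finset.disjoint_left]
    intro i hiA hiB
    rw [hA, Finset.mem_filter] at hiA
    rw [hB, Finset.mem_filter] at hiB
    omega
  have hunion : A ∪ B = Finset.univ := by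
    ext i
    simp only [hA, hB, Finset.mem_union, Finset.mem_filter, Finset.mem_univ, true_and,
      iff_true]
    have : (σ i).val ≠ i.val := fun h => hσfix i (Fin.val_injective h)
    omega
  have hcardA : A.card = k / 2 := by
    have h1 : A.card + B.card = k := by
      rw [← Finset.card_union_of_disjoint hdisj, hunion, Finset.card_univ, Fintype.card_fin]
    omega
  -- the finset of representatives
  have h1t : 1 < t := by omega
  set f : Fin k → (Fin k × Fin t) ⊕ Unit := fun i => Sum.inl (i, ⟨1, h1t⟩) with hf
  have hfinj : Function.Injective f := by
    intro a b h
    simpa [hf] using h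
  set s : Finset ((Fin k × Fin t) ⊕ Unit) := A.image f ∪ {Sum.inr ()} with hs
  have hscard : s.card = k / 2 + 1 := by
    rw [hs, Finset.card_union_of_disjoint (by simp [hf]), Finset.card_image_of_injective _ hfinj,
      Finset.card_singleton, hcardA]
  -- class values on s
  have hclmem : ∀ x ∈ s, (∃ i ∈ A, x = f i ∧ cl x = i.val) ∨ (x = Sum.inr () ∧ cl x = k) := by
    intro x hx
    rw [hs, Finset.mem_union, Finset.mem_image] at hx
    rcases hx with ⟨i, hi, rfl⟩ | hx
    · left
      refine ⟨i, hi, rfl, ?_⟩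
      have : i.val < (σ i).val := by
        rw [hA] at hi; simpa using hi
      simp only [hclp, hf]
      omega
    · right
      simp only [Finset.mem_singleton] at hx
      exact ⟨hx, by rw [hx]⟩
  have hpair : ((s : Set _)).Pairwise fun u v => ¬ G.Reachable u v := by
    intro x hx y hy hxy hr
    have hcxy := hreach x y hr
    rcases hclmem x hx with ⟨i, hi, rfl, hci⟩ | ⟨rfl, hcx⟩ <;>
      rcases hclmem y hy with ⟨i', hi', rfl, hci'⟩ | ⟨rfl, hcy⟩
    · apply hxy
      have : i = i' := Fin.val_injective (by omega)
      rw [this]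
    · have : i.val < k := i.isLt
      omega
    · have : i'.val < k := i'.isLt
      omega
    · exact hxy rfl
  -- apply the counting lemma
  have hfin : Δ.Finite := Set.toFinite _
  have hsubD : H.edgeSet \ G.edgeSet ⊆ ↑hfin.toFinset := by
    intro x hx
    rw [Finset.mem_coe, Set.Finite.mem_toFinset, hΔ, Set.mem_symmDiff]
    exact Or.inr ⟨hx.1, hx.2⟩
  have := aux_count H hH.preconnected hfin.toFinset.card G hfin.toFinset rfl hsubD s hpair
  rw [hscard] at this
  rw [hΔ] at hfin ⊢
  rw [Set.ncard_eq_toFinset_card _ hfin]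
  omega
end
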